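/- arXiv:1911.11648 — 4 statements merged into one kernel-verified Lean document; each statement's English description precedes it below -/
import Mathlib

section
/- Let G be a finite soluble group that is not nilpotent. If every cyclic subgroup of prime-power order of G is either self-normalizing in G or 𝔑-subnormal in G, then there exist a prime p and an element x of G such that the cyclic subgroup ⟨x⟩ is a Sylow p-subgroup of G, ⟨x⟩ is self-normalizing in G, the derived subgroup G′ together with ⟨x⟩ gives a semidirect decomposition G = G′ ⋊ ⟨x⟩ (i.e. G′⟨x⟩ = G and G′ ∩ ⟨x⟩ = 1), and the subgroup G′⟨x^p⟩ is nilpotent. -/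
variable {G : Type*}

/-- `K` is a maximal subgroup of `L`: `K < L` and there is no subgroup strictly between. -/
def IsMaximalSubgroupOf [Group G] (K L : Subgroup G) : Prop :=
  K < L ∧ ∀ M : Subgroup G, K < M → M ≤ L → M = L

/-- The quotient of `L` by the normal core of `K` in `L` is nilpotent. -/
def NilpotentQuotByCore [Group G] (K L : Subgroup G) : Prop :=
  Group.IsNilpotent (↥L ⧸ (K.subgroupOf L).normalCore)

/-- The quotient of `L` by the normal core of `K` in `L` has nilpotent derived subgroup
(i.e. belongs to the formation `𝔑𝔄`). -/
def NAQuotByCore [Group G] (K L : Subgroup G) : Prop :=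
  Group.IsNilpotent ↥(commutator (↥L ⧸ (K.subgroupOf L).normalCore))

/-- `H` is `𝔑`-subnormal in `G`: `H = G` or there is a chain
`H = H₀ <· H₁ <· ... <· Hₙ = G` of maximal subgroups with each `Hᵢ/(Hᵢ₋₁)_{Hᵢ}` nilpotent. -/
def NSubnormal [Group G] (H : Subgroup G) : Prop :=
  H = ⊤ ∨ ∃ (n : ℕ) (c : Fin (n + 1) → Subgroup G),
    c 0 = H ∧ c (Fin.last n) = ⊤ ∧
    ∀ i : Fin n, IsMaximalSubgroupOf (c i.castSucc) (c i.succ) ∧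
      NilpotentQuotByCore (c i.castSucc) (c i.succ)

/-- `H` is `𝔑𝔄`-subnormal in `G`: `H = G` or there is a chain
`H = H₀ <· H₁ <· ... <· Hₙ = G` of maximal subgroups with each `Hᵢ/(Hᵢ₋₁)_{Hᵢ}`
having nilpotent derived subgroup. -/
def NASubnormal [Group G] (H : Subgroup G) : Prop :=
  H = ⊤ ∨ ∃ (n : ℕ) (c : Fin (n + 1) → Subgroup G),
    c 0 = H ∧ c (Fin.last n) = ⊤ ∧
    ∀ i : Fin n, IsMaximalSubgroupOf (c i.castSucc) (c i.succ) ∧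
      NAQuotByCore (c i.castSucc) (c i.succ)

/-- `H` is `𝔑`-abnormal in `G`: for all `K`, `L` with `H ≤ K` and `K` maximal in `L`,
the quotient `L/K_L` is not nilpotent. -/
def NAbnormal [Group G] (H : Subgroup G) : Prop :=
  ∀ K L : Subgroup G, H ≤ K → IsMaximalSubgroupOf K L → ¬ NilpotentQuotByCore K L

/-- `H` is `𝔑𝔄`-abnormal in `G`: for all `K`, `L` with `H ≤ K` and `K` maximal in `L`,
the quotient `L/K_L` does not have nilpotent derived subgroup. -/
def NAAbnormal [Group G] (H : Subgroup G) : Prop :=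
  ∀ K L : Subgroup G, H ≤ K → IsMaximalSubgroupOf K L → ¬ NAQuotByCore K L

/-- `N` is the nilpotent residual `G^𝔑` of `G`: the smallest normal subgroup
with nilpotent quotient. -/
def IsNilpotentResidual [Group G] (N : Subgroup G) : Prop :=
  ∃ hN : N.Normal,
    haveI := hN
    Group.IsNilpotent (G ⧸ N) ∧
      ∀ M : Subgroup G, ∀ hM : M.Normal,
        (haveI := hM; Group.IsNilpotent (G ⧸ M)) → N ≤ M

/-- `N` is the `𝔑𝔄`-residual `G^{𝔑𝔄}` of `G`: the smallest normal subgroup whose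
quotient has nilpotent derived subgroup. -/
def IsNAResidual [Group G] (N : Subgroup G) : Prop :=
  ∃ hN : N.Normal,
    haveI := hN
    Group.IsNilpotent ↥(commutator (G ⧸ N)) ∧
      ∀ M : Subgroup G, ∀ hM : M.Normal,
        (haveI := hM; Group.IsNilpotent ↥(commutator (G ⧸ M))) → N ≤ M

/-- `H` is an `𝔑`-projector of `G`: for every normal `N ⊴ G`, the image `HN/N` is a
maximal nilpotent subgroup of `G/N`. -/
def IsNProjector [Group G] (H : Subgroup G) : Prop :=
  ∀ N : Subgroup G, ∀ hN : N.Normal,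
    haveI := hN
    Group.IsNilpotent ↥(H.map (QuotientGroup.mk' N)) ∧
      ∀ K : Subgroup (G ⧸ N), Group.IsNilpotent ↥K →
        H.map (QuotientGroup.mk' N) ≤ K → K = H.map (QuotientGroup.mk' N)


/-!
If no cyclic subgroup of prime-power order were self-normalizing, all of them would be
`𝔑`-subnormal, hence subnormal: a maximal subgroup whose quotient by its core is nilpotent is
normal. A subnormal `p`-subgroup lies in `O_p(G)`, so every Sylow subgroup would be normal and `G`
nilpotent. Hence some `⟨x⟩` of order `p ^ k` is self-normalizing. A self-normalizing `p`-subgroup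
is a Sylow subgroup, so the Frattini argument applied to the normal subgroup `G′⟨x⟩` gives
`G = G′⟨x⟩`, and Burnside's transfer theorem for the abelian, self-normalizing `⟨x⟩` gives
`G′ ∩ ⟨x⟩ = 1`. Consequently `T = G′⟨x ^ p⟩` is proper. A self-normalizing primary cyclic
subgroup `⟨y⟩ ≤ T` would again give `G = G′⟨y⟩ ≤ T`, so every primary cyclic subgroup of `T` is
subnormal in `G`, and `T` is nilpotent by the same criterion.
-/

open Subgroup

-- `O_p(G)`, the largest normal `p`-subgroup
def pCore (p : ℕ) (G : Type*) [Group G] : Subgroup G := ⨅ P : Sylow p G, (P : Subgroup G)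

section

variable {p : ℕ} [Group G]

instance pCore_characteristic : (pCore p G).Characteristic := by
  refine characteristic_iff_le_comap.mpr fun ϕ g hg => mem_comap.mpr <| mem_iInf.mpr fun P => ?_
  have := mem_iInf.mp hg (ϕ⁻¹ • P)
  rwa [Sylow.pointwise_smul_def, mem_pointwise_smul_iff_inv_smul_mem, inv_inv] at this

theorem isPGroup_pCore : IsPGroup p (pCore p G) :=
  let P := Classical.arbitrary (Sylow p G)
  P.isPGroup'.to_le (iInf_le _ P)

theorem IsPGroup.le_pCore {N : Subgroup G} [N.Normal] (hN : IsPGroup p N) : N ≤ pCore p G :=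
  le_iInf hN.le_sylow_of_normal

theorem Subgroup.normal_of_isCoatom_of_isNilpotent_quotient_normalCore {H : Subgroup G}
    (hH : IsCoatom H) [Group.IsNilpotent (G ⧸ H.normalCore)] : H.Normal := by
  set π := QuotientGroup.mk' H.normalCore
  have hπ : Function.Surjective π := QuotientGroup.mk'_surjective _
  have hcomap : (H.map π).comap π = H :=
    comap_map_eq_self (by rw [QuotientGroup.ker_mk']; exact normalCore_le H)
  have hne : H.map π ≠ ⊤ := fun htop => hH.1 (by rw [← hcomap, htop, comap_top])
  have hlt : H.map π < normalizer (H.map π : Set (G ⧸ H.normalCore)) :=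
    Group.normalizerCondition_of_isNilpotent _ (lt_top_iff_ne_top.mpr hne)
  have htop : (normalizer (H.map π : Set (G ⧸ H.normalCore))).comap π = ⊤ :=
    hH.2 _ (by simpa only [hcomap] using (comap_lt_comap_of_surjective hπ).mpr hlt)
  rw [← comap_top π, (comap_injective hπ).eq_iff, normalizer_eq_top_iff] at htop
  rw [← hcomap]
  exact htop.comap π

theorem IsMaximalSubgroupOf.isCoatom_subgroupOf {K L : Subgroup G}
    (h : IsMaximalSubgroupOf K L) : IsCoatom (K.subgroupOf L) := by
  obtain ⟨hlt, hmax⟩ := h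
  refine ⟨fun htop => hlt.ne (le_antisymm hlt.le (subgroupOf_eq_top.mp htop)), fun M hM => ?_⟩
  have hKM : K < M.map L.subtype := by
    rw [← map_subgroupOf_eq_of_le hlt.le]
    exact (map_lt_map_iff_of_injective L.subtype_injective).mpr hM
  apply map_injective L.subtype_injective
  rw [hmax _ hKM (map_subtype_le M), ← MonoidHom.range_eq_map, range_subtype]

theorem NSubnormal.isSubnormal {H : Subgroup G} (hH : NSubnormal H) : H.IsSubnormal := by
  obtain rfl | ⟨n, c, rfl, hlast, hstep⟩ := hH
  · exact .top
  refine Fin.reverseInduction (motive := fun i => (c i).IsSubnormal) (hlast ▸ .top)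
    (fun i ih => ?_) 0
  obtain ⟨hmax, hnil⟩ := hstep i
  have : Group.IsNilpotent _ := hnil
  exact .step _ _ hmax.1.le ih
    (normal_of_isCoatom_of_isNilpotent_quotient_normalCore hmax.isCoatom_subgroupOf)

theorem Subgroup.sup_inf_eq_of_le_of_inf_eq_bot {N H K : Subgroup G} [N.Normal] (hHK : H ≤ K)
    (hNK : N ⊓ K = ⊥) : (N ⊔ H) ⊓ K = H := by
  refine le_antisymm (fun g hg => ?_) (le_inf le_sup_right hHK)
  obtain ⟨hg, hgK⟩ := mem_inf.mp hg
  obtain ⟨n, hn, h, hh, rfl⟩ := mem_sup_of_normal_left.mp hg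
  have hnK : n ∈ K := by simpa using mul_mem hgK (inv_mem (hHK hh))
  have hn1 : n ∈ N ⊓ K := mem_inf.mpr ⟨hn, hnK⟩
  rw [hNK, mem_bot] at hn1
  rwa [hn1, one_mul]

theorem eq_one_of_mem_zpowers_pow {x : G} {k : ℕ} (hp : p.Prime) (hx : orderOf x = p ^ k)
    (hmem : x ∈ zpowers (x ^ p)) : x = 1 := by
  cases k with
  | zero => exact orderOf_eq_one_iff.mp (by simpa using hx)
  | succ k =>
    have h1 : orderOf x ∣ orderOf (x ^ p) := orderOf_dvd_of_mem_zpowers hmem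
    have h2 : orderOf (x ^ p) ∣ p ^ k :=
      orderOf_dvd_of_pow_eq_one (by rw [← pow_mul, ← pow_succ', ← hx, pow_orderOf_eq_one])
    rw [hx] at h1
    have := (Nat.pow_dvd_pow_iff_le_right hp.one_lt).mp (h1.trans h2)
    omega

end

section Finite

variable [Group G] [Finite G] {p : ℕ}

theorem Subgroup.IsSubnormal.le_pCore {H : Subgroup G} (hH : H.IsSubnormal)
    (hp : IsPGroup p H) : H ≤ pCore p G := by
  induction hcard : Nat.card G using Nat.strong_induction_on generalizing G with
  | _ n ih =>
  obtain rfl | hne := eq_or_ne H ⊤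
  · exact hp.le_pCore
  obtain ⟨K, hK, hHK, hKtop⟩ := hH.exists_normal_and_le_and_lt_top_of_ne hne
  have hcardK : Nat.card K < n := hcard ▸ lt_of_le_of_ne K.card_le_card_group
    (mt K.card_eq_iff_eq_top.mp hKtop.ne)
  -- `O_p(K)` is characteristic in `K ⊴ G`, hence a normal `p`-subgroup of `G`.
  have hle := ih _ hcardK hH.subgroupOf hp.comap_subtype rfl
  calc H = (H.subgroupOf K).map K.subtype := (map_subgroupOf_eq_of_le hHK).symm
    _ ≤ (pCore p K).map K.subtype := map_mono hle
    _ ≤ pCore p G := (isPGroup_pCore.map K.subtype).le_pCore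

theorem isPGroup_zpowers_iff [Fact p.Prime] {g : G} :
    IsPGroup p (zpowers g) ↔ ∃ k, orderOf g = p ^ k := by
  rw [IsPGroup.iff_card, Nat.card_zpowers]

theorem Subgroup.isNilpotent_of_forall_isSubnormal_zpowers (T : Subgroup G)
    (h : ∀ g ∈ T, ∀ p k : ℕ, p.Prime → orderOf g = p ^ k → (zpowers g).IsSubnormal) :
    Group.IsNilpotent T := by
  refine (Group.isNilpotent_of_finite_tfae.out 0 3).mpr fun p hp P => ?_
  have := hp
  have hPle : (P : Subgroup T) ≤ (pCore p G).subgroupOf T := fun g hg => by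
    have hpg : IsPGroup p (zpowers (g : G)) :=
      (P.isPGroup'.map T.subtype).to_le (zpowers_le.mpr (mem_map_of_mem _ hg))
    obtain ⟨k, hk⟩ := isPGroup_zpowers_iff.mp hpg
    exact (h g g.2 p k Fact.out hk).le_pCore hpg (mem_zpowers _)
  rw [← P.is_maximal' isPGroup_pCore.comap_subtype hPle]
  exact normal_subgroupOf

theorem Sylow.exists_eq_of_normalizer_eq_self [Fact p.Prime] {H : Subgroup G}
    (hH : IsPGroup p H) (hN : normalizer (H : Set G) = H) :
    ∃ P : Sylow p G, (P : Subgroup G) = H := by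
  refine ⟨hH.toSylow fun hdvd => ?_, rfl⟩
  obtain ⟨n, hn⟩ := hH.exists_card_eq
  have hpow : p ^ (n + 1) ∣ Nat.card G := by
    rw [← H.card_mul_index, hn, pow_succ]
    exact mul_dvd_mul_left _ hdvd
  -- otherwise `p` divides `|N_G(H) : H| = 1`
  have h1 : (H.subgroupOf (normalizer (H : Set G))).index = 1 := by
    rw [subgroupOf_eq_top.mpr hN.le, index_top]
  have := Sylow.prime_dvd_card_quotient_normalizer hpow hn
  exact (Fact.out : p.Prime).not_dvd_one (h1 ▸ this)

theorem Sylow.eq_top_of_le_of_normalizer_eq_self [Fact p.Prime] (P : Sylow p G)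
    (hP : normalizer ((P : Subgroup G) : Set G) = P) {N : Subgroup G} [N.Normal]
    (hPN : (P : Subgroup G) ≤ N) : N = ⊤ := by
  rw [← P.normalizer_sup_eq_top' hPN, ← Sylow.coe_coe, hP, sup_eq_right.mpr hPN]

theorem commutator_sup_zpowers_eq_top_of_normalizer_eq_self {x : G} {k : ℕ} (hp : p.Prime)
    (hx : orderOf x = p ^ k) (hN : normalizer (zpowers x : Set G) = zpowers x) :
    commutator G ⊔ zpowers x = ⊤ := by
  have := Fact.mk hp
  obtain ⟨P, hP⟩ := Sylow.exists_eq_of_normalizer_eq_self (isPGroup_zpowers_iff.mpr ⟨k, hx⟩) hN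
  have : (commutator G ⊔ zpowers x).Normal := .of_commutator_le _ le_sup_left
  exact P.eq_top_of_le_of_normalizer_eq_self (by rwa [hP]) (hP ▸ le_sup_right)

open scoped IsMulCommutative in
theorem Sylow.commutator_inf_eq_bot_of_normalizer_le_centralizer [Fact p.Prime] (P : Sylow p G)
    (hP : normalizer (P : Set G) ≤ centralizer (P : Set G)) : commutator G ⊓ P = ⊥ := by
  have : IsMulCommutative P := ⟨⟨fun a b => Subtype.ext (hP (le_normalizer b.2) a a.2)⟩⟩
  exact disjoint_iff.mp ((MonoidHom.ker_transferSylow_disjoint P hP P P.isPGroup').mono_left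
    (Abelianization.commutator_subset_ker _))

end Finite

theorem stmt_0 [Group G] [Finite G] [Group.IsSolvable G]
    (hG : ¬ Group.IsNilpotent G)
    (h : ∀ x : G, (∃ q k : ℕ, q.Prime ∧ orderOf x = q ^ k) →
      Subgroup.normalizer (Subgroup.zpowers x : Set G) = Subgroup.zpowers x ∨ NSubnormal (Subgroup.zpowers x)) :
    ∃ (p : ℕ) (x : G), p.Prime ∧
      (∃ P : Sylow p G, (P : Subgroup G) = Subgroup.zpowers x) ∧
      Subgroup.normalizer (Subgroup.zpowers x : Set G) = Subgroup.zpowers x ∧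
      commutator G ⊔ Subgroup.zpowers x = ⊤ ∧
      commutator G ⊓ Subgroup.zpowers x = ⊥ ∧
      Group.IsNilpotent ↥(commutator G ⊔ Subgroup.zpowers (x ^ p)) := by
  have hcomm : commutator G ≠ ⊤ := by
    have : Nontrivial G := by
      contrapose! hG
      infer_instance
    exact (Group.IsSolvable.commutator_lt_top_of_nontrivial G).ne
  obtain ⟨x, p, k, hp, hx, hself⟩ : ∃ (x : G) (p k : ℕ), p.Prime ∧ orderOf x = p ^ k ∧
      normalizer (zpowers x : Set G) = zpowers x := by
    by_contra! hnone
    have := (⊤ : Subgroup G).isNilpotent_of_forall_isSubnormal_zpowers fun g _ p k hp hg =>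
      ((h g ⟨p, k, hp, hg⟩).resolve_left (hnone g p k hp hg)).isSubnormal
    exact hG (Group.nilpotent_of_mulEquiv topEquiv)
  have := Fact.mk hp
  obtain ⟨P, hP⟩ := Sylow.exists_eq_of_normalizer_eq_self (isPGroup_zpowers_iff.mpr ⟨k, hx⟩) hself
  have hsup := commutator_sup_zpowers_eq_top_of_normalizer_eq_self hp hx hself
  have hinf : commutator G ⊓ zpowers x = ⊥ := by
    rw [← hP]
    refine P.commutator_inf_eq_bot_of_normalizer_le_centralizer ?_
    rw [← Sylow.coe_coe, hP, hself]
    exact le_centralizer _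
  have hT : commutator G ⊔ zpowers (x ^ p) ≠ ⊤ := fun hT => by
    have hxT : x ∈ zpowers (x ^ p) := by
      rw [← sup_inf_eq_of_le_of_inf_eq_bot (zpowers_le.mpr (pow_mem (mem_zpowers x) p)) hinf, hT,
        top_inf_eq]
      exact mem_zpowers x
    rw [eq_one_of_mem_zpowers_pow hp hx hxT, zpowers_one_eq_bot, sup_bot_eq] at hsup
    exact hcomm hsup
  refine ⟨p, x, hp, ⟨P, hP⟩, hself, hsup, hinf, ?_⟩
  refine isNilpotent_of_forall_isSubnormal_zpowers _ fun y hy q j hq hyj => ?_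
  refine ((h y ⟨q, j, hq, hyj⟩).resolve_left fun hyself => hT ?_).isSubnormal
  rw [← top_le_iff, ← commutator_sup_zpowers_eq_top_of_normalizer_eq_self hq hyj hyself]
  exact sup_le le_sup_left (zpowers_le.mpr hy)
end

section
/- Let G be a finite soluble group that is not nilpotent. Suppose there exist a prime p and an element x of G such that the cyclic subgroup ⟨x⟩ is a Sylow p-subgroup of G, ⟨x⟩ is self-normalizing in G, G = G′ ⋊ ⟨x⟩ (i.e. G′⟨x⟩ = G and G′ ∩ ⟨x⟩ = 1 for the derived subgroup G′), and the subgroup G′⟨x^p⟩ is nilpotent. Then every proper subgroup of G is either self-normalizing in G or 𝔑-subnormal in G. -/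
variable {G : Type*}

/-!
Put `N = G′⟨x^p⟩`. It contains `G′`, so it is normal with abelian quotient, and `G/N` is generated
by the image of `x`; hence `g^p ∈ N` for every `g`.

If `H ≤ N`, refine `H ≤ N ≤ G` to chains of maximal subgroups. A step `K ⋖ L` below `N` has
`L/K_L` nilpotent because `L` is; a step above `N` has `L/K_L` a quotient of `L/(L ∩ N) ≤ G/N`.

If `H ⊄ N`, pick `h ∈ H \ N`. Its `p`-part `y` still lies outside `N` and, being a `p`-element,
lies in a conjugate `⟨x'⟩` of the Sylow subgroup `⟨x⟩`. As `y ∉ ⟨x'^p⟩ ≤ N`, `y` generates `⟨x'⟩`,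
so `H` contains a self-normalizing Sylow subgroup, and the Frattini argument applied in `N_G(H)`
gives `N_G(H) = H`.
-/

open Subgroup Relation

theorem Relation.reflTransGen_of_le_of_covBy {α : Type*} [PartialOrder α] [WellFoundedLT α]
    [WellFoundedGT α] {r : α → α → Prop} {a b : α} (hab : a ≤ b)
    (hr : ∀ x y, a ≤ x → y ≤ b → x ⋖ y → r x y) : ReflTransGen r a b := by
  induction b using WellFoundedLT.induction with
  | ind b ih =>
    obtain rfl | hlt := hab.eq_or_lt
    · exact .refl
    obtain ⟨c, hac, hcb⟩ := exists_le_covBy_of_lt hlt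
    exact (ih c hcb.lt hac fun x y hx hy => hr x y hx (hy.trans hcb.le)).tail
      (hr c b hac le_rfl hcb)

section
variable [Group G]

theorem CovBy.isMaximalSubgroupOf {K L : Subgroup G} (h : K ⋖ L) : IsMaximalSubgroupOf K L :=
  ⟨h.lt, fun _ hKM hML => hML.eq_of_not_lt (h.2 hKM)⟩

theorem NSubnormal.of_reflTransGen {H : Subgroup G}
    (h : ReflTransGen (fun K L => IsMaximalSubgroupOf K L ∧ NilpotentQuotByCore K L) H ⊤) :
    NSubnormal H := by
  induction h using Relation.ReflTransGen.head_induction_on with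
  | refl => exact .inl rfl
  | @head K L hKL _ ih =>
    rcases ih with rfl | ⟨n, c, rfl, hlast, hc⟩
    · exact .inr ⟨1, ![K, ⊤], rfl, rfl, fun i => by fin_cases i; simpa using hKL⟩
    · refine .inr ⟨n + 1, Fin.cons K c, rfl, by rwa [← Fin.succ_last, Fin.cons_succ], ?_⟩
      refine Fin.cases (by simpa using hKL) fun i => ?_
      simpa [← Fin.succ_castSucc] using hc i

theorem nilpotentQuotByCore_of_ker_le {K L : Subgroup G} {Q : Type*} [Group Q]
    [Group.IsNilpotent Q] (f : L →* Q) (hf : f.ker ≤ K.subgroupOf L) :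
    NilpotentQuotByCore K L := by
  have : Group.IsNilpotent (L ⧸ f.ker) :=
    Group.nilpotent_of_mulEquiv (QuotientGroup.quotientKerEquivRange f).symm
  exact Group.nilpotent_of_surjective _ (QuotientGroup.lift_surjective_of_surjective _ _
    (QuotientGroup.mk'_surjective _) (by simpa using normal_le_normalCore.mpr hf))

theorem nSubnormal_of_le [Finite G] {N H : Subgroup G} [N.Normal] [Group.IsNilpotent N]
    [Group.IsNilpotent (G ⧸ N)] (hHN : H ≤ N) : NSubnormal H := by
  have below : ∀ K L : Subgroup G, L ≤ N → NilpotentQuotByCore K L := fun K L hLN =>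
    nilpotentQuotByCore_of_ker_le (inclusion hLN)
      ((MonoidHom.ker_eq_bot_iff _).mpr (inclusion_injective hLN) ▸ bot_le)
  have above : ∀ K L : Subgroup G, N ≤ K → NilpotentQuotByCore K L := fun K L hNK => by
    refine nilpotentQuotByCore_of_ker_le ((QuotientGroup.mk' N).comp L.subtype) fun g hg => ?_
    rw [MonoidHom.mem_ker, MonoidHom.comp_apply, QuotientGroup.mk'_apply,
      QuotientGroup.eq_one_iff] at hg
    exact mem_subgroupOf.mpr (hNK hg)
  exact .of_reflTransGen <|
    (reflTransGen_of_le_of_covBy hHN fun K L _ hLN hKL =>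
      ⟨hKL.isMaximalSubgroupOf, below K L hLN⟩).trans
    (reflTransGen_of_le_of_covBy le_top fun K L hNK _ hKL =>
      ⟨hKL.isMaximalSubgroupOf, above K L hNK⟩)

theorem isNilpotent_quotient_of_commutator_le {N : Subgroup G} [N.Normal]
    (h : commutator G ≤ N) : Group.IsNilpotent (G ⧸ N) :=
  ⟨1, upperCentralSeries_one_eq_top_iff.mpr
    (Subgroup.Normal.quotient_commutative_iff_commutator_le.mpr h)⟩

theorem pow_mem_of_commutator_sup_zpowers_eq_top {N : Subgroup G} [N.Normal]
    (hN : commutator G ≤ N) {x : G} (hx : commutator G ⊔ zpowers x = ⊤) {p : ℕ}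
    (hxp : x ^ p ∈ N) (g : G) : g ^ p ∈ N := by
  have hgen : zpowers (x : G ⧸ N) = ⊤ := by
    rw [← QuotientGroup.mk'_apply, ← MonoidHom.map_zpowers, ← bot_sup_eq (map _ _),
      ← (Subgroup.map_eq_bot_iff _).mpr (QuotientGroup.ker_mk' N ▸ hN), ← Subgroup.map_sup,
      hx, ← MonoidHom.range_eq_map, MonoidHom.range_eq_top]
    exact QuotientGroup.mk'_surjective N
  obtain ⟨k, hk⟩ := mem_zpowers_iff.mp (hgen ▸ mem_top (g : G ⧸ N))
  rw [← QuotientGroup.eq_one_iff, QuotientGroup.mk_pow, ← hk, ← zpow_natCast, ← zpow_mul,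
    mul_comm, zpow_mul, zpow_natCast, ← QuotientGroup.mk_pow,
    (QuotientGroup.eq_one_iff _).mpr hxp, one_zpow]

theorem pow_notMem_of_not_dvd {N : Subgroup G} [N.Normal] {p m : ℕ} [Fact p.Prime] {g : G}
    (hgp : g ^ p ∈ N) (hg : g ∉ N) (hpm : ¬ p ∣ m) : g ^ m ∉ N := by
  have hord : orderOf (g : G ⧸ N) = p := orderOf_eq_prime
    (by rwa [← QuotientGroup.mk_pow, QuotientGroup.eq_one_iff])
    (by rwa [Ne, QuotientGroup.eq_one_iff])
  exact fun hgm => hpm (hord ▸ orderOf_dvd_of_pow_eq_one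
    (by rwa [← QuotientGroup.mk_pow, QuotientGroup.eq_one_iff]))

theorem exists_pow_isPGroup_zpowers [Finite G] {p : ℕ} (hp : p.Prime) (g : G) :
    ∃ m, ¬ p ∣ m ∧ IsPGroup p (zpowers (g ^ m)) := by
  have hg : orderOf g ≠ 0 := (orderOf_pos g).ne'
  refine ⟨ordCompl[p] (orderOf g), Nat.not_dvd_ordCompl hp hg,
    IsPGroup.of_card (n := (orderOf g).factorization p) ?_⟩
  rw [Nat.card_zpowers, orderOf_pow_of_dvd (Nat.ordCompl_pos p hg).ne' (Nat.ordCompl_dvd _ _),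
    Nat.div_div_self (Nat.ordProj_dvd _ _) hg]

theorem mem_zpowers_of_notMem_zpowers_pow [Finite G] {p : ℕ} [hp : Fact p.Prime] {x y : G}
    (hx : IsPGroup p (zpowers x)) (hy : y ∈ zpowers x) (hyp : y ∉ zpowers (x ^ p)) :
    x ∈ zpowers y := by
  obtain ⟨k, rfl⟩ := mem_zpowers_iff.mp hy
  obtain ⟨n, hn⟩ := hx.exists_card_eq
  rw [Nat.card_zpowers] at hn
  rw [mem_zpowers_zpow_iff, hn]
  have hpk : ¬ p ∣ k.natAbs := fun hpk => by
    obtain ⟨t, rfl⟩ := Int.natCast_dvd.mpr hpk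
    exact hyp (mem_zpowers_iff.mpr ⟨t, by rw [zpow_mul, zpow_natCast]⟩)
  exact (Nat.coprime_comm.mp (hp.out.coprime_iff_not_dvd.mpr hpk)).pow_right n

end

namespace Sylow
variable [Group G] {p : ℕ}

theorem coe_smul_eq_map (g : G) (P : Sylow p G) :
    ((g • P : Sylow p G) : Subgroup G) = (P : Subgroup G).map (MulAut.conj g).toMonoidHom :=
  rfl

theorem coe_smul_eq_zpowers {P : Sylow p G} {x : G} (hP : (P : Subgroup G) = zpowers x)
    (g : G) : ((g • P : Sylow p G) : Subgroup G) = zpowers (g * x * g⁻¹) := by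
  rw [coe_smul_eq_map, hP, MonoidHom.map_zpowers]
  rfl

theorem normalizer_smul_eq_self {P : Sylow p G} (hP : normalizer ((P : Subgroup G) : Set G) = P)
    (g : G) :
    normalizer (((g • P : Sylow p G) : Subgroup G) : Set G) = (g • P : Sylow p G) := by
  rw [coe_smul_eq_map, ← map_equiv_normalizer_eq, hP]

variable [Finite G] [hp : Fact p.Prime]

theorem normalizer_eq_self_of_le {P : Sylow p G} (hP : normalizer ((P : Subgroup G) : Set G) = P)
    {K : Subgroup G} (hPK : (P : Subgroup G) ≤ K) : normalizer (K : Set G) = K := by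
  set L := normalizer (K : Set G)
  have hPL : (P : Subgroup G) ≤ L := hPK.trans le_normalizer
  have : (K.subgroupOf L).Normal := (normal_subgroupOf_iff_le_normalizer le_normalizer).mpr le_rfl
  have hfrattini := (P.subtype hPL).normalizer_sup_eq_top' (subgroupOf_mono L hPK)
  rw [← (P.subtype hPL).coe_coe, coe_subtype, ← subgroupOf_normalizer_eq hPL, hP,
    sup_eq_right.mpr (subgroupOf_mono L hPK), subgroupOf_eq_top] at hfrattini
  exact le_antisymm hfrattini le_normalizer

theorem exists_smul_le_of_not_le {N H : Subgroup G} [N.Normal] (hpow : ∀ g : G, g ^ p ∈ N)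
    {P : Sylow p G} {x : G} (hP : (P : Subgroup G) = zpowers x) (hHN : ¬ H ≤ N) :
    ∃ g : G, ((g • P : Sylow p G) : Subgroup G) ≤ H := by
  obtain ⟨h, hhH, hhN⟩ := SetLike.not_le_iff_exists.mp hHN
  obtain ⟨m, hpm, hm⟩ := exists_pow_isPGroup_zpowers hp.out h
  have hhmN : h ^ m ∉ N := pow_notMem_of_not_dvd (hpow h) hhN hpm
  obtain ⟨Q, hQ⟩ := hm.exists_le_sylow
  obtain ⟨g, rfl⟩ := MulAction.exists_smul_eq G P Q
  have hgP := coe_smul_eq_zpowers hP g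
  refine ⟨g, ?_⟩
  rw [hgP] at hQ ⊢
  refine zpowers_le.mpr (zpowers_le.mpr (pow_mem hhH m) ?_)
  exact mem_zpowers_of_notMem_zpowers_pow (hgP ▸ (g • P).isPGroup') (hQ (mem_zpowers _))
    fun h' => hhmN (zpowers_le.mpr (hpow _) h')

end Sylow

theorem stmt_1_general [Group G] [Finite G]
    (p : ℕ) (hp : p.Prime) (x : G)
    (hsyl : ∃ P : Sylow p G, (P : Subgroup G) = Subgroup.zpowers x)
    (hself : Subgroup.normalizer (Subgroup.zpowers x : Set G) = Subgroup.zpowers x)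
    (hsup : commutator G ⊔ Subgroup.zpowers x = ⊤)
    (hnil : Group.IsNilpotent ↥(commutator G ⊔ Subgroup.zpowers (x ^ p))) :
    ∀ H : Subgroup G, H ≠ ⊤ → Subgroup.normalizer (H : Set G) = H ∨ NSubnormal H := by
  have : Fact p.Prime := ⟨hp⟩
  intro H _
  set N := commutator G ⊔ zpowers (x ^ p)
  have hGN : commutator G ≤ N := le_sup_left
  have : N.Normal := .of_commutator_le _ hGN
  by_cases hHN : H ≤ N
  · have := isNilpotent_quotient_of_commutator_le hGN
    exact .inr (nSubnormal_of_le hHN)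
  · obtain ⟨P, hP⟩ := hsyl
    have hpow := pow_mem_of_commutator_sup_zpowers_eq_top hGN hsup
      (mem_sup_right (mem_zpowers (x ^ p)))
    obtain ⟨g, hgH⟩ := Sylow.exists_smul_le_of_not_le hpow hP hHN
    exact .inl (Sylow.normalizer_eq_self_of_le (Sylow.normalizer_smul_eq_self (hP ▸ hself) g) hgH)

theorem stmt_1 [Group G] [Finite G] [Group.IsSolvable G]
    (hG : ¬ Group.IsNilpotent G)
    (p : ℕ) (hp : p.Prime) (x : G)
    (hsyl : ∃ P : Sylow p G, (P : Subgroup G) = Subgroup.zpowers x)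
    (hself : Subgroup.normalizer (Subgroup.zpowers x : Set G) = Subgroup.zpowers x)
    (hsup : commutator G ⊔ Subgroup.zpowers x = ⊤)
    (hinf : commutator G ⊓ Subgroup.zpowers x = ⊥)
    (hnil : Group.IsNilpotent ↥(commutator G ⊔ Subgroup.zpowers (x ^ p))) :
    ∀ H : Subgroup G, H ≠ ⊤ → Subgroup.normalizer (H : Set G) = H ∨ NSubnormal H :=
  stmt_1_general p hp x hsyl hself hsup hnil
end

section
/- Let G be a finite soluble group whose derived subgroup G′ is not nilpotent. Suppose there exist a prime p and an element x of G such that the cyclic subgroup ⟨x⟩ is a Sylow p-subgroup of G, ⟨x⟩ is self-normalizing in G, G = G′ ⋊ ⟨x⟩ (i.e. G′⟨x⟩ = G and G′ ∩ ⟨x⟩ = 1), and the subgroup G′⟨x^p⟩ has nilpotent derived subgroup. Then every proper subgroup of G is either self-normalizing in G or 𝔑𝔄-subnormal in G. -/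
variable {G : Type*}

/-!
Write `D = G′` and `M = D⟨x ^ p⟩`. Since `G / D ≅ ⟨x⟩` is a cyclic `p`-group, every subgroup
containing `D` lies in `M` or equals `G`, and `M ≠ G` because `M′` is nilpotent while `G′` is not.
So `M` is maximal with `G / M_G` abelian, and as `M′` is nilpotent, every maximal chain from a
subgroup of `M` up to `M` has `𝔑𝔄` factors. A subgroup `H` not in `M` supplements `D`, so
`|⟨x⟩| = |G : D|` divides `|H|` and `H` contains a Sylow `p`-subgroup `R` of `G`. Being conjugate
to `⟨x⟩`, `R` is self-normalizing, and the Frattini argument in `N_G(H)` gives `N_G(H) = H`.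
-/

section DerivedSubgroup

variable {G₁ G₂ : Type*} [Group G₁] [Group G₂]

theorem isNilpotent_commutator_of_surjective {f : G₁ →* G₂} (hf : Function.Surjective f)
    [Group.IsNilpotent (commutator G₁)] : Group.IsNilpotent (commutator G₂) := by
  have h := map_derivedSeries_eq hf 1
  rw [derivedSeries_one, derivedSeries_one] at h
  exact h ▸ Group.nilpotent_of_surjective _ (f.subgroupMap_surjective (commutator G₁))

theorem isNilpotent_commutator_of_injective {f : G₁ →* G₂} (hf : Function.Injective f)
    [Group.IsNilpotent (commutator G₂)] : Group.IsNilpotent (commutator G₁) := by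
  let g : commutator G₁ →* commutator G₂ :=
    (f.comp (commutator G₁).subtype).codRestrict (commutator G₂) fun a =>
      map_derivedSeries_le_derivedSeries f 1 ⟨a, a.2, rfl⟩
  have hg : Function.Injective g := fun a b hab => Subtype.ext (hf (congrArg Subtype.val hab))
  exact Group.nilpotent_of_mulEquiv (MonoidHom.ofInjective hg).symm

end DerivedSubgroup

theorem isNilpotent_commutator_of_le [Group G] {L M : Subgroup G} (h : L ≤ M)
    [Group.IsNilpotent (commutator ↥M)] : Group.IsNilpotent (commutator ↥L) :=
  isNilpotent_commutator_of_injective (Subgroup.inclusion_injective h)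

theorem isMaximalSubgroupOf_iff_covBy [Group G] {K L : Subgroup G} :
    IsMaximalSubgroupOf K L ↔ K ⋖ L := by
  refine and_congr_right fun _ =>
    ⟨fun h M hKM hML => (h M hKM hML.le ▸ hML).false, fun h M hKM hML => ?_⟩
  by_contra hne
  exact h hKM (lt_of_le_of_ne hML hne)

theorem naQuotByCore_of_isNilpotent_commutator [Group G] {K L : Subgroup G}
    [Group.IsNilpotent (commutator ↥L)] : NAQuotByCore K L :=
  isNilpotent_commutator_of_surjective (QuotientGroup.mk'_surjective _)

theorem naQuotByCore_of_commutator_le [Group G] {K L : Subgroup G} (h : ⁅L, L⁆ ≤ K) :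
    NAQuotByCore K L := by
  have hLK : commutator ↥L ≤ K.subgroupOf L := by
    rwa [Subgroup.subgroupOf, ← Subgroup.map_le_iff_le_comap, Subgroup.map_subtype_commutator]
  have hbot : commutator (L ⧸ (K.subgroupOf L).normalCore) = ⊥ := by
    rw [← derivedSeries_one, ← map_derivedSeries_eq (QuotientGroup.mk'_surjective _),
      Subgroup.map_eq_bot_iff, QuotientGroup.ker_mk']
    exact Subgroup.normal_le_normalCore.mpr hLK
  rw [NAQuotByCore, hbot]
  infer_instance

theorem NASubnormal.of_isMaximalSubgroupOf [Group G] {H K : Subgroup G} (hK : NASubnormal K)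
    (hmax : IsMaximalSubgroupOf H K) (hq : NAQuotByCore H K) : NASubnormal H := by
  right
  rcases hK with rfl | ⟨n, c, h0, hl, hstep⟩
  · refine ⟨1, ![H, ⊤], rfl, rfl, fun i => ?_⟩
    fin_cases i
    exact ⟨hmax, hq⟩
  · refine ⟨n + 1, Fin.cons H c, Fin.cons_zero _ _, by rwa [← Fin.succ_last, Fin.cons_succ], ?_⟩
    intro i
    induction i using Fin.cases with
    | zero => simpa only [Fin.castSucc_zero, Fin.cons_zero, Fin.cons_succ, h0] using ⟨hmax, hq⟩
    | succ j => simpa only [← Fin.succ_castSucc, Fin.cons_succ] using hstep j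

theorem NASubnormal.of_le [Group G] [Finite G] {H L : Subgroup G} (hL : NASubnormal L)
    [Group.IsNilpotent (commutator ↥L)] (hHL : H ≤ L) : NASubnormal H := by
  induction H using WellFoundedGT.induction with
  | _ H ih =>
    rcases hHL.eq_or_lt with rfl | hlt
    · exact hL
    obtain ⟨K, hHK, hKL⟩ := exists_covBy_le_of_lt hlt
    have := isNilpotent_commutator_of_le hKL
    exact (ih K hHK.lt hKL).of_isMaximalSubgroupOf (isMaximalSubgroupOf_iff_covBy.mpr hHK)
      naQuotByCore_of_isNilpotent_commutator

namespace Sylow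

variable [Group G] {p : ℕ} [Fact p.Prime]

theorem normalizer_eq_self_of_le_s3 [Finite G] (P : Sylow p G) {H : Subgroup G}
    (hN : Subgroup.normalizer ((P : Subgroup G) : Set G) ≤ H) : Subgroup.normalizer (H : Set G) = H := by
  have hPN : (P : Subgroup G) ≤ Subgroup.normalizer (H : Set G) :=
    Subgroup.le_normalizer.trans (hN.trans Subgroup.le_normalizer)
  have hfrat := normalizer_sup_eq_top' (P.subtype hPN) (N := H.subgroupOf _)
    (by rw [coe_subtype]; exact Subgroup.subgroupOf_mono _ (Subgroup.le_normalizer.trans hN))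
  rw [← Sylow.coe_coe, coe_subtype, ← Subgroup.subgroupOf_normalizer_eq hPN,
    sup_of_le_right (Subgroup.subgroupOf_mono _ hN), Subgroup.subgroupOf_eq_top] at hfrat
  exact le_antisymm hfrat Subgroup.le_normalizer

theorem normalizer_eq_self [Finite (Sylow p G)] {P : Sylow p G}
    (hP : Subgroup.normalizer ((P : Subgroup G) : Set G) = P) (Q : Sylow p G) :
    Subgroup.normalizer ((Q : Subgroup G) : Set G) = Q := by
  obtain ⟨g, rfl⟩ := MulAction.exists_smul_eq G P Q
  have hconj : ((g • P : Sylow p G) : Subgroup G) =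
      (P : Subgroup G).map (MulAut.conj g).toMonoidHom := rfl
  rw [hconj, ← Subgroup.map_equiv_normalizer_eq]
  exact congrArg _ hP

theorem exists_le_of_card_dvd [Finite G] (P : Sylow p G) {H : Subgroup G}
    (h : Nat.card P ∣ Nat.card H) : ∃ R : Sylow p G, (R : Subgroup G) ≤ H := by
  obtain ⟨Q⟩ : Nonempty (Sylow p H) := inferInstance
  obtain ⟨R, hQR⟩ := (Q.isPGroup'.map H.subtype).exists_le_sylow
  have hRQ : Nat.card R ≤ Nat.card ((Q : Subgroup H).map H.subtype) := by
    rw [Subgroup.card_map_of_injective H.subtype_injective, R.card_eq_multiplicity]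
    refine Nat.le_of_dvd Nat.card_pos (Q.pow_dvd_card_of_pow_dvd_card ?_)
    rwa [← P.card_eq_multiplicity]
  exact ⟨R, Subgroup.eq_of_le_of_card_ge hQR hRQ ▸ Subgroup.map_subtype_le _⟩

end Sylow

theorem mem_zpowers_zpow_of_not_dvd [Group G] {x : G} {p n : ℕ} (hp : p.Prime)
    (hx : orderOf x = p ^ n) {m : ℤ} (hm : ¬ (p : ℤ) ∣ m) : x ∈ Subgroup.zpowers (x ^ m) := by
  rw [mem_zpowers_zpow_iff, hx, ← Int.isCoprime_iff_gcd_eq_one, Nat.cast_pow]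
  exact ((Nat.prime_iff_prime_int.mp hp).coprime_iff_not_dvd.mpr hm).symm.pow_right

namespace Subgroup

variable [Group G]

theorem eq_top_of_not_le_sup_zpowers_pow {N K : Subgroup G} [N.Normal] {x : G} {p n : ℕ}
    (hp : p.Prime) (hx : orderOf x = p ^ n) (hsup : N ⊔ zpowers x = ⊤) (hNK : N ≤ K)
    (hK : ¬ K ≤ N ⊔ zpowers (x ^ p)) : K = ⊤ := by
  obtain ⟨k, hkK, hkM⟩ := Set.not_subset.mp hK
  have hk : k ∈ ((N ⊔ zpowers x : Subgroup G) : Set G) := hsup ▸ mem_top k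
  rw [normal_mul] at hk
  obtain ⟨d, hd, _, ⟨m, rfl⟩, rfl⟩ := hk
  have hxmK : x ^ m ∈ K := by simpa using K.mul_mem (K.inv_mem (hNK hd)) hkK
  have hm : ¬ (p : ℤ) ∣ m := by
    rintro ⟨t, rfl⟩
    refine hkM (mul_mem (mem_sup_left hd) (mem_sup_right ?_))
    change x ^ ((p : ℤ) * t) ∈ _
    rw [zpow_mul, zpow_natCast]
    exact zpow_mem (mem_zpowers _) t
  have hxK : zpowers x ≤ K :=
    zpowers_le.mpr (zpowers_le.mpr hxmK (mem_zpowers_zpow_of_not_dvd hp hx hm))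
  exact top_le_iff.mp (hsup ▸ sup_le hNK hxK)

theorem card_dvd_card_of_sup_eq_top {N K H : Subgroup G} [N.Normal] (hsup : N ⊔ K = ⊤)
    (hinf : N ⊓ K = ⊥) (hH : H ⊔ N = ⊤) : Nat.card K ∣ Nat.card H := by
  have hcompl : IsComplement' K N := by
    refine isComplement'_of_disjoint_and_mul_eq_univ (disjoint_iff.mpr (inf_comm N K ▸ hinf)) ?_
    rw [← mul_normal, sup_comm, hsup, coe_top]
  rw [← hcompl.index_eq_card, ← relIndex_top_right, ← hH, relIndex_sup_right]
  exact relIndex_dvd_card N H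

end Subgroup

theorem stmt_3_general [Group G] [Finite G]
    (hG : ¬ Group.IsNilpotent ↥(commutator G))
    (p : ℕ) (hp : p.Prime) (x : G)
    (hsyl : ∃ P : Sylow p G, (P : Subgroup G) = Subgroup.zpowers x)
    (hself : Subgroup.normalizer (Subgroup.zpowers x : Set G) = Subgroup.zpowers x)
    (hsup : commutator G ⊔ Subgroup.zpowers x = ⊤)
    (hinf : commutator G ⊓ Subgroup.zpowers x = ⊥)
    (hnil : Group.IsNilpotent ↥(commutator ↥(commutator G ⊔ Subgroup.zpowers (x ^ p)))) :
    ∀ H : Subgroup G, H ≠ ⊤ → Subgroup.normalizer (H : Set G) = H ∨ NASubnormal H := by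
  have := Fact.mk hp
  obtain ⟨P, hP⟩ := hsyl
  set M := commutator G ⊔ Subgroup.zpowers (x ^ p)
  have hx : orderOf x = p ^ (Nat.card G).factorization p := by
    rw [← Nat.card_zpowers, ← hP, P.card_eq_multiplicity]
  have hcovered : ∀ K, commutator G ≤ K → ¬ K ≤ M → K = ⊤ := fun K =>
    Subgroup.eq_top_of_not_le_sup_zpowers_pow hp hx hsup
  have hMne : M ≠ ⊤ := fun hM => hG <| by
    rw [hM] at hnil
    exact isNilpotent_commutator_of_surjective (f := (Subgroup.topEquiv (G := G)).toMonoidHom)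
      Subgroup.topEquiv.surjective
  have hMmax : IsMaximalSubgroupOf M ⊤ := ⟨lt_top_iff_ne_top.mpr hMne,
    fun K hMK _ => hcovered K (le_sup_left.trans hMK.le) hMK.not_ge⟩
  have hMsub : NASubnormal M :=
    NASubnormal.of_isMaximalSubgroupOf (Or.inl rfl) hMmax
      (naQuotByCore_of_commutator_le le_sup_left)
  intro H _
  by_cases hHM : H ≤ M
  · exact Or.inr (hMsub.of_le hHM)
  have hHD : H ⊔ commutator G = ⊤ :=
    hcovered _ le_sup_right fun h => hHM (le_sup_left.trans h)
  obtain ⟨R, hRH⟩ := P.exists_le_of_card_dvd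
    (hP ▸ Subgroup.card_dvd_card_of_sup_eq_top hsup hinf hHD)
  have hR : Subgroup.normalizer ((R : Subgroup G) : Set G) = R :=
    Sylow.normalizer_eq_self (hP ▸ hself) R
  exact Or.inl (R.normalizer_eq_self_of_le_s3 (hR.le.trans hRH))

theorem stmt_3 [Group G] [Finite G] [Group.IsSolvable G]
    (hG : ¬ Group.IsNilpotent ↥(commutator G))
    (p : ℕ) (hp : p.Prime) (x : G)
    (hsyl : ∃ P : Sylow p G, (P : Subgroup G) = Subgroup.zpowers x)
    (hself : Subgroup.normalizer (Subgroup.zpowers x : Set G) = Subgroup.zpowers x)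
    (hsup : commutator G ⊔ Subgroup.zpowers x = ⊤)
    (hinf : commutator G ⊓ Subgroup.zpowers x = ⊥)
    (hnil : Group.IsNilpotent ↥(commutator ↥(commutator G ⊔ Subgroup.zpowers (x ^ p)))) :
    ∀ H : Subgroup G, H ≠ ⊤ → Subgroup.normalizer (H : Set G) = H ∨ NASubnormal H :=
  stmt_3_general hG p hp x hsyl hself hsup hinf hnil
end

section
/- Let G be a finite soluble group, p a prime, and x an element of G of p-power order such that the cyclic subgroup ⟨x⟩ is self-normalizing in G (N_G(⟨x⟩) = ⟨x⟩). Then ⟨x⟩ is a Sylow p-subgroup of G, G has a normal Hall p′-subgroup G_{p′}, and G_{p′} coincides with the derived subgroup G′ and with the nilpotent residual G^𝔑 of G; in particular G = G′ ⋊ ⟨x⟩ (i.e. G′⟨x⟩ = G and G′ ∩ ⟨x⟩ = 1). -/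
variable {G : Type*}

/-
Since `⟨x⟩` is a self-normalizing `p`-subgroup and `p`-groups satisfy the normalizer condition,
`⟨x⟩` is a Sylow subgroup; being abelian and self-normalizing it lies in the centre of its
normalizer, so Burnside's transfer theorem yields a normal `p`-complement `K`, the kernel of the
transfer `G → ⟨x⟩`. The image of `⟨x⟩` in any nilpotent quotient `G/M` is a normal Sylow subgroup
whose preimage is normal and contains `⟨x⟩`, hence is all of `G` by the Frattini argument; so
`G/M` is a `p`-group and the `p′`-group `K` lies in `M`. Taking `M = G′` and using that `G/K ≅ ⟨x⟩`
is abelian gives `K = G′`, which is then the nilpotent residual and a complement to `⟨x⟩`.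
-/

open Subgroup

open scoped IsMulCommutative

section

variable [Group G] {p : ℕ}

theorem IsPGroup.exists_sylow_eq_of_normalizer_eq [Fact p.Prime] [Finite G] {H : Subgroup G}
    (hH : IsPGroup p H) (hself : normalizer (H : Set G) = H) :
    ∃ P : Sylow p G, (P : Subgroup G) = H := by
  obtain ⟨P, hHP⟩ := hH.exists_le_sylow
  refine ⟨P, (eq_of_le_of_not_lt hHP fun hlt => ?_).symm⟩
  have : Group.IsNilpotent P := P.isPGroup'.isNilpotent
  have hlt' : H.subgroupOf P < ⊤ := by
    rw [lt_top_iff_ne_top, Ne, subgroupOf_eq_top]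
    exact hlt.not_ge
  have hgrow := Group.normalizerCondition_of_isNilpotent _ hlt'
  rw [← subgroupOf_normalizer_eq hHP, hself] at hgrow
  exact hgrow.false

theorem IsPGroup.le_ker_of_not_dvd_card [Fact p.Prime] {Q : Type*} [Group Q] (hQ : IsPGroup p Q)
    (f : G →* Q) {K : Subgroup G} (hK : ¬ p ∣ Nat.card K) : K ≤ f.ker := by
  have hmap : K.map f = ⊥ := card_eq_one.mp <|
    ((hQ.to_subgroup _).card_eq_or_dvd).resolve_right fun h => hK (h.trans (K.card_map_dvd f))
  rwa [Subgroup.map_eq_bot_iff] at hmap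

instance QuotientGroup.isNilpotent_quotient_commutator : Group.IsNilpotent (G ⧸ commutator G) :=
  inferInstanceAs (Group.IsNilpotent (Abelianization G))

theorem Subgroup.normalizer_le_centralizer_of_normalizer_eq {H : Subgroup G} [IsMulCommutative H]
    (hH : normalizer (H : Set G) = H) : normalizer (H : Set G) ≤ centralizer (H : Set G) :=
  hH.symm ▸ le_centralizer_iff_isMulCommutative.mpr ‹_›

namespace Sylow

variable [Fact p.Prime] [Finite G] (P : Sylow p G) (hP : normalizer (P : Set G) = P)
include hP

theorem eq_top_of_le_of_normalizer_eq {N : Subgroup G} [N.Normal] (hPN : (P : Subgroup G) ≤ N) :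
    N = ⊤ := by
  rw [← P.normalizer_sup_eq_top' hPN, hP, sup_of_le_right hPN]

theorem isPGroup_quotient_of_normalizer_eq (M : Subgroup G) [M.Normal]
    [Group.IsNilpotent (G ⧸ M)] : IsPGroup p (G ⧸ M) := by
  have hπ := QuotientGroup.mk'_surjective M
  let Q := P.mapSurjective hπ
  have : (Q : Subgroup (G ⧸ M)).Normal :=
    Q.normal_of_normalizerCondition Group.normalizerCondition_of_isNilpotent
  have hPQ : (P : Subgroup G) ≤ (Q : Subgroup (G ⧸ M)).comap (QuotientGroup.mk' M) :=
    le_comap_map _ _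
  have hQ : (Q : Subgroup (G ⧸ M)) = ⊤ := by
    rw [← map_comap_eq_self_of_surjective hπ Q, P.eq_top_of_le_of_normalizer_eq hP hPQ,
      map_top_of_surjective _ hπ]
  exact (hQ ▸ Q.isPGroup').of_equiv topEquiv

variable [IsMulCommutative P]

theorem ker_transferSylow_le_of_isNilpotent (M : Subgroup G) [M.Normal]
    [Group.IsNilpotent (G ⧸ M)] :
    (MonoidHom.transferSylow P
      (normalizer_le_centralizer_of_normalizer_eq (H := P.toSubgroup) hP)).ker ≤ M := by
  simpa using (P.isPGroup_quotient_of_normalizer_eq hP M).le_ker_of_not_dvd_card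
    (QuotientGroup.mk' M) (MonoidHom.not_dvd_card_ker_transferSylow _ _)

theorem ker_transferSylow_eq_commutator :
    (MonoidHom.transferSylow P
      (normalizer_le_centralizer_of_normalizer_eq (H := P.toSubgroup) hP)).ker = commutator G :=
  le_antisymm (P.ker_transferSylow_le_of_isNilpotent hP _)
    (Abelianization.commutator_subset_ker _)

theorem isNilpotentResidual_commutator : IsNilpotentResidual (commutator G) :=
  ⟨inferInstance, inferInstance, fun M _ _ => P.ker_transferSylow_eq_commutator hP ▸
    P.ker_transferSylow_le_of_isNilpotent hP M⟩

end Sylow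

end

theorem stmt_17_general [Group G] [Finite G] (p : ℕ) (hp : p.Prime)
    (x : G) (hx : ∃ k : ℕ, orderOf x = p ^ k)
    (hself : Subgroup.normalizer (Subgroup.zpowers x : Set G) = Subgroup.zpowers x) :
    (∃ P : Sylow p G, (P : Subgroup G) = Subgroup.zpowers x) ∧
    (commutator G).Normal ∧
    ¬ p ∣ Nat.card ↥(commutator G) ∧
    (∃ n : ℕ, (commutator G).index = p ^ n) ∧
    IsNilpotentResidual (commutator G) ∧
    commutator G ⊔ Subgroup.zpowers x = ⊤ ∧
    commutator G ⊓ Subgroup.zpowers x = ⊥ := by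
  have : Fact p.Prime := ⟨hp⟩
  obtain ⟨k, hk⟩ := hx
  have hxp : IsPGroup p (zpowers x) := IsPGroup.of_card (by rw [Nat.card_zpowers, hk])
  obtain ⟨P, hPx⟩ := hxp.exists_sylow_eq_of_normalizer_eq hself
  have hP : normalizer (P : Set G) = P := by rw [← P.coe_coe, hPx]; exact hself
  have : IsMulCommutative P := hPx ▸ zpowers_isMulCommutative x
  have hK := P.ker_transferSylow_eq_commutator hP
  have hcompl := MonoidHom.ker_transferSylow_isComplement' P
    (normalizer_le_centralizer_of_normalizer_eq (H := P.toSubgroup) hP)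
  rw [hK, hPx] at hcompl
  refine ⟨⟨P, hPx⟩, inferInstance, hK ▸ MonoidHom.not_dvd_card_ker_transferSylow P _, ⟨k, ?_⟩,
    P.isNilpotentResidual_commutator hP, hcompl.sup_eq_top, disjoint_iff.mp hcompl.disjoint⟩
  rw [hcompl.symm.index_eq_card, Nat.card_zpowers, hk]

theorem stmt_17 [Group G] [Finite G] [Group.IsSolvable G] (p : ℕ) (hp : p.Prime)
    (x : G) (hx : ∃ k : ℕ, orderOf x = p ^ k)
    (hself : Subgroup.normalizer (Subgroup.zpowers x : Set G) = Subgroup.zpowers x) :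
    (∃ P : Sylow p G, (P : Subgroup G) = Subgroup.zpowers x) ∧
    (commutator G).Normal ∧
    ¬ p ∣ Nat.card ↥(commutator G) ∧
    (∃ n : ℕ, (commutator G).index = p ^ n) ∧
    IsNilpotentResidual (commutator G) ∧
    commutator G ⊔ Subgroup.zpowers x = ⊤ ∧
    commutator G ⊓ Subgroup.zpowers x = ⊥ :=
  stmt_17_general p hp x hx hself
end
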